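/- arXiv:1612.02417 — 5 statements merged into one kernel-verified Lean document; each statement's English description precedes it below -/
import Mathlib

section
/- Let ψ : I × U → ℝᵐ be C¹ and suppose Λ : I × U → M_{m×n}(ℝ) is continuous and satisfies Λ(t, x(t))·(ẋ(t) − f(t, x(t))) = d/dt [ψ(t, x(t))] for every C¹ function x : I → U (not only solutions). Then Λ(t,x) = ∂ψ/∂x(t,x) and Λ(t,x) f(t,x) = −∂ψ/∂t(t,x) for all (t,x) ∈ I × U. -/
/-!
Along a `C¹` curve `x` through `(t, x₀)` with velocity `v`, the chain rule turns the hypothesis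
into `Λ(t, x₀) (v - f(t, x₀)) = Dψ(t, x₀) (1, v)`, and such a curve staying in `U` exists for every
`v` (a bounded reparametrisation of the line `x₀ + s v`). Taking `v = 0` gives `Λ f = -∂ψ/∂t`;
subtracting this from the identity for `v = eⱼ` gives the `j`-th column `Λ eⱼ = ∂ψ/∂xⱼ`.
-/

open Metric Real

lemma hasDerivAt_mul_sin_div {c : ℝ} (hc : c ≠ 0) (t s : ℝ) :
    HasDerivAt (fun s => c * sin ((s - t) / c)) (cos ((s - t) / c)) s := by
  have hlin : HasDerivAt (fun s : ℝ => (s - t) / c) c⁻¹ s := by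
    simpa [div_eq_mul_inv] using ((hasDerivAt_id s).sub_const t).div_const c
  exact (hlin.sin.const_mul c).congr_deriv (by field_simp)

lemma IsOpen.exists_differentiable_curve_hasDerivAt {E : Type*} [NormedAddCommGroup E]
    [NormedSpace ℝ E] {U : Set E} (hU : IsOpen U) {x₀ : E} (hx₀ : x₀ ∈ U) (t : ℝ) (v : E) :
    ∃ γ : ℝ → E, Differentiable ℝ γ ∧ (∀ s, γ s ∈ U) ∧ γ t = x₀ ∧ HasDerivAt γ v t := by
  obtain ⟨δ, hδ, hball⟩ := isOpen_iff.mp hU x₀ hx₀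
  set c := δ / (‖v‖ + 1)
  have hc : 0 < c := by positivity
  have hγ (s : ℝ) : HasDerivAt (fun s => x₀ + (c * sin ((s - t) / c)) • v)
      (cos ((s - t) / c) • v) s :=
    ((hasDerivAt_mul_sin_div hc.ne' t s).smul_const v).const_add x₀
  refine ⟨_, fun s => (hγ s).differentiableAt, fun s => hball ?_, by simp, by simpa using hγ t⟩
  have hcv : c * ‖v‖ < δ := by
    rw [div_mul_eq_mul_div, div_lt_iff₀ (by positivity)]
    nlinarith [norm_nonneg v]
  rw [mem_ball, dist_eq_norm, add_sub_cancel_left, norm_smul, norm_mul, Real.norm_of_nonneg hc.le]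
  calc c * ‖sin ((s - t) / c)‖ * ‖v‖ ≤ c * 1 * ‖v‖ := by
        gcongr
        exact abs_sin_le_one _
    _ < δ := by rwa [mul_one]

lemma HasDerivAt.hasDerivAt_uncurry_comp_prodMk {E F : Type*} [NormedAddCommGroup E]
    [NormedSpace ℝ E] [NormedAddCommGroup F] [NormedSpace ℝ F] {g : ℝ → E → F} {γ : ℝ → E}
    {v : E} {t : ℝ} (hγ : HasDerivAt γ v t)
    (hg : DifferentiableAt ℝ (fun p : ℝ × E => g p.1 p.2) (t, γ t)) :
    HasDerivAt (fun s => g s (γ s)) (fderiv ℝ (fun p : ℝ × E => g p.1 p.2) (t, γ t) (1, v)) t :=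
  hg.hasFDerivAt.comp_hasDerivAt_of_eq t ((hasDerivAt_id t).prodMk hγ) rfl

theorem multiplier_eq_jacobian_and_mulVec_f_general
    (n m : ℕ) (I : Set ℝ) (U : Set (Fin n → ℝ))
    (hI : IsOpen I) (hU : IsOpen U)
    (f : ℝ → (Fin n → ℝ) → (Fin n → ℝ))
    (ψ : ℝ → (Fin n → ℝ) → (Fin m → ℝ))
    (hψ : ContDiffOn ℝ 1 (fun p : ℝ × (Fin n → ℝ) => ψ p.1 p.2) (I ×ˢ U))
    (Λ : ℝ → (Fin n → ℝ) → Matrix (Fin m) (Fin n) ℝ)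
    (hmult : ∀ x : ℝ → (Fin n → ℝ), (∀ t, DifferentiableAt ℝ x t) →
      (∀ t ∈ I, x t ∈ U) → ∀ t ∈ I,
      (Λ t (x t)).mulVec (deriv x t - f t (x t)) = deriv (fun s => ψ s (x s)) t) :
    ∀ t ∈ I, ∀ xv ∈ U,
      (∀ i j, Λ t xv i j =
        fderiv ℝ (fun p : ℝ × (Fin n → ℝ) => ψ p.1 p.2) (t, xv) (0, Pi.single j 1) i) ∧
      (Λ t xv).mulVec (f t xv) =
        - fderiv ℝ (fun p : ℝ × (Fin n → ℝ) => ψ p.1 p.2) (t, xv) (1, 0) := by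
  intro t ht xv hxv
  set L := fderiv ℝ (fun p : ℝ × (Fin n → ℝ) => ψ p.1 p.2) (t, xv)
  have hψd : DifferentiableAt ℝ (fun p : ℝ × (Fin n → ℝ) => ψ p.1 p.2) (t, xv) :=
    (hψ.contDiffAt ((hI.prod hU).mem_nhds ⟨ht, hxv⟩)).differentiableAt one_ne_zero
  have along_curve (v : Fin n → ℝ) : (Λ t xv).mulVec (v - f t xv) = L (1, v) := by
    obtain ⟨γ, hγd, hγU, hγt, hγ⟩ := hU.exists_differentiable_curve_hasDerivAt hxv t v
    have hchain := hγ.hasDerivAt_uncurry_comp_prodMk (hγt ▸ hψd)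
    have hcurve := hmult γ hγd (fun s _ => hγU s) t ht
    rwa [hγ.deriv, hchain.deriv, hγt] at hcurve
  have columns (v : Fin n → ℝ) : (Λ t xv).mulVec v = L (0, v) := by
    have hsplit : ((0 : ℝ), v) = (1, v) - (1, 0) := by simp
    rw [hsplit, map_sub, ← along_curve, ← along_curve, ← Matrix.mulVec_sub,
      sub_sub_sub_cancel_right, sub_zero]
  refine ⟨fun i j => ?_, ?_⟩
  · simpa [Matrix.mulVec_single] using congrFun (columns (Pi.single j 1)) i
  · simpa [Matrix.mulVec_neg] using congrArg Neg.neg (along_curve 0)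

/-- If `Λ(t,x(t)) ⬝ (ẋ(t) − f(t,x(t))) = d/dt ψ(t,x(t))` for every `C¹` curve `x`
(not only solutions), then `Λ = ∂ψ/∂x` and `Λ f = −∂ψ/∂t` on `I × U`. -/
theorem multiplier_eq_jacobian_and_mulVec_f
    (n m : ℕ) (I : Set ℝ) (U : Set (Fin n → ℝ))
    (hI : IsOpen I) (hU : IsOpen U)
    (f : ℝ → (Fin n → ℝ) → (Fin n → ℝ))
    (hf : ContinuousOn (fun p : ℝ × (Fin n → ℝ) => f p.1 p.2) (I ×ˢ U))
    (ψ : ℝ → (Fin n → ℝ) → (Fin m → ℝ))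
    (hψ : ContDiffOn ℝ 1 (fun p : ℝ × (Fin n → ℝ) => ψ p.1 p.2) (I ×ˢ U))
    (Λ : ℝ → (Fin n → ℝ) → Matrix (Fin m) (Fin n) ℝ)
    (hΛc : ContinuousOn (fun p : ℝ × (Fin n → ℝ) => Λ p.1 p.2) (I ×ˢ U))
    (hmult : ∀ x : ℝ → (Fin n → ℝ), (∀ t, DifferentiableAt ℝ x t) →
      (∀ t ∈ I, x t ∈ U) → ∀ t ∈ I,
      (Λ t (x t)).mulVec (deriv x t - f t (x t)) = deriv (fun s => ψ s (x s)) t) :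
    ∀ t ∈ I, ∀ xv ∈ U,
      (∀ i j, Λ t xv i j =
        fderiv ℝ (fun p : ℝ × (Fin n → ℝ) => ψ p.1 p.2) (t, xv) (0, Pi.single j 1) i) ∧
      (Λ t xv).mulVec (f t xv) =
        - fderiv ℝ (fun p : ℝ × (Fin n → ℝ) => ψ p.1 p.2) (t, xv) (1, 0) :=
  multiplier_eq_jacobian_and_mulVec_f_general n m I U hI hU f ψ hψ Λ hmult
end

section
/- For the midpoint discretization of the rigid body equations, (ωᵢᵏ⁺¹ − ωᵢᵏ)/τ equal to the Euler right-hand sides evaluated at the averages ω̄ᵢ = (ωᵢᵏ⁺¹ + ωᵢᵏ)/2 (i.e. (ω₁ᵏ⁺¹−ω₁ᵏ)/τ = ((I₂−I₃)/(I₂I₃)) ω̄₂ω̄₃, and cyclically), both discrete invariants are exactly preserved: E(ωᵏ⁺¹) = E(ωᵏ) and L(ωᵏ⁺¹) = L(ωᵏ), where E(ω) = ω₁²/I₁ + ω₂²/I₂ + ω₃²/I₃ and L(ω) = ω₁² + ω₂² + ω₃². -/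
/-- The midpoint discretization of Euler's rigid body equations exactly preserves
the discrete energy and angular momentum. -/
theorem rigid_body_midpoint_conserves
    (I₁ I₂ I₃ : ℝ) (hI₁ : I₁ ≠ 0) (hI₂ : I₂ ≠ 0) (hI₃ : I₃ ≠ 0)
    (τ : ℝ) (hτ : 0 < τ)
    (ω₁k ω₂k ω₃k ω₁k1 ω₂k1 ω₃k1 : ℝ)
    (h₁ : (ω₁k1 - ω₁k) / τ =
      (I₂ - I₃) / (I₂ * I₃) * ((ω₂k1 + ω₂k) / 2) * ((ω₃k1 + ω₃k) / 2))
    (h₂ : (ω₂k1 - ω₂k) / τ =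
      (I₃ - I₁) / (I₁ * I₃) * ((ω₁k1 + ω₁k) / 2) * ((ω₃k1 + ω₃k) / 2))
    (h₃ : (ω₃k1 - ω₃k) / τ =
      (I₁ - I₂) / (I₁ * I₂) * ((ω₁k1 + ω₁k) / 2) * ((ω₂k1 + ω₂k) / 2)) :
    ω₁k1 ^ 2 / I₁ + ω₂k1 ^ 2 / I₂ + ω₃k1 ^ 2 / I₃ =
      ω₁k ^ 2 / I₁ + ω₂k ^ 2 / I₂ + ω₃k ^ 2 / I₃ ∧
    ω₁k1 ^ 2 + ω₂k1 ^ 2 + ω₃k1 ^ 2 = ω₁k ^ 2 + ω₂k ^ 2 + ω₃k ^ 2 := by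
  have hτ' := hτ.ne'
  have e₁ : (ω₁k1 - ω₁k) * (I₂ * I₃) * 4 = τ * (I₂ - I₃) * (ω₂k1 + ω₂k) * (ω₃k1 + ω₃k) := by
    field_simp at h₁; linarith
  have e₂ : (ω₂k1 - ω₂k) * (I₁ * I₃) * 4 = τ * (I₃ - I₁) * (ω₁k1 + ω₁k) * (ω₃k1 + ω₃k) := by
    field_simp at h₂; linarith
  have e₃ : (ω₃k1 - ω₃k) * (I₁ * I₂) * 4 = τ * (I₁ - I₂) * (ω₁k1 + ω₁k) * (ω₂k1 + ω₂k) := by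
    field_simp at h₃; linarith
  constructor
  · field_simp
    linear_combination ((ω₁k1 + ω₁k) * e₁ + (ω₂k1 + ω₂k) * e₂ + (ω₃k1 + ω₃k) * e₃) / 4
  · have h4 : (4:ℝ) * (I₁*I₂*I₃) ≠ 0 := by
      simp [hI₁, hI₂, hI₃]
    have key : (ω₁k1 ^ 2 + ω₂k1 ^ 2 + ω₃k1 ^ 2 - (ω₁k ^ 2 + ω₂k ^ 2 + ω₃k ^ 2)) * (4 * (I₁*I₂*I₃)) = 0 := by
      linear_combination (ω₁k1 + ω₁k) * I₁ * e₁ + (ω₂k1 + ω₂k) * I₂ * e₂ + (ω₃k1 + ω₃k) * I₃ * e₃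
    have := (mul_eq_zero.mp key).resolve_right h4
    linarith
end

section
/- Consider the discrete 2-species Lotka–Volterra scheme: (xᵏ⁺¹ − xᵏ)/τ = xᵏ( α yᵏ (log yᵏ⁺¹ − log yᵏ)/(yᵏ⁺¹ − yᵏ) − β yᵏ ) and (yᵏ⁺¹ − yᵏ)/τ = yᵏ( δ xᵏ − γ xᵏ (log xᵏ⁺¹ − log xᵏ)/(xᵏ⁺¹ − xᵏ) ), with xᵏ, xᵏ⁺¹, yᵏ, yᵏ⁺¹ > 0, xᵏ⁺¹ ≠ xᵏ, yᵏ⁺¹ ≠ yᵏ. Then V(xᵏ⁺¹, yᵏ⁺¹) = V(xᵏ, yᵏ), where V(x,y) = γ log x − δx + α log y − βy. -/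
/-- The multiplier-method discretization of the 2-species Lotka–Volterra system
exactly conserves `V(x,y) = γ log x − δ x + α log y − β y`. -/
theorem lotka_volterra_two_species_discrete_conserves
    (α β γ δ : ℝ) (hα : 0 < α) (hβ : 0 < β) (hγ : 0 < γ) (hδ : 0 < δ)
    (τ : ℝ) (hτ : 0 < τ)
    (xk yk xk1 yk1 : ℝ)
    (hxk : 0 < xk) (hyk : 0 < yk) (hxk1 : 0 < xk1) (hyk1 : 0 < yk1)
    (hxne : xk1 ≠ xk) (hyne : yk1 ≠ yk)
    (hx : (xk1 - xk) / τ =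
      xk * (α * yk * ((Real.log yk1 - Real.log yk) / (yk1 - yk)) - β * yk))
    (hy : (yk1 - yk) / τ =
      yk * (δ * xk - γ * xk * ((Real.log xk1 - Real.log xk) / (xk1 - xk)))) :
    γ * Real.log xk1 - δ * xk1 + α * Real.log yk1 - β * yk1 =
      γ * Real.log xk - δ * xk + α * Real.log yk - β * yk := by
  have hdx : xk1 - xk ≠ 0 := sub_ne_zero.mpr hxne
  have hdy : yk1 - yk ≠ 0 := sub_ne_zero.mpr hyne
  have hτ' : τ ≠ 0 := hτ.ne'
  have hxk' : xk ≠ 0 := hxk.ne'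
  have hyk' : yk ≠ 0 := hyk.ne'
  field_simp at hx hy
  have key : (τ * xk * yk) * (γ * Real.log xk1 - δ * xk1 + α * Real.log yk1 - β * yk1) =
      (τ * xk * yk) * (γ * Real.log xk - δ * xk + α * Real.log yk - β * yk) := by
    linear_combination hy - hx
  exact mul_left_cancel₀ (by positivity) key
end

section
/- Consider the discrete scheme F₁ᵗ: (x₁ᵏ⁺¹ − x₁ᵏ)/τ = x₁ᵏ⁺¹(x₂ᵏ⁺¹ − x₃ᵏ), (x₂ᵏ⁺¹ − x₂ᵏ)/τ = x₂ᵏx₃ᵏ − x₁ᵏ⁺¹x₂ᵏ⁺¹, (x₃ᵏ⁺¹ − x₃ᵏ)/τ = x₃ᵏ(x₁ᵏ⁺¹ − x₂ᵏ). Then x₁ᵏ⁺¹ + x₂ᵏ⁺¹ + x₃ᵏ⁺¹ = x₁ᵏ + x₂ᵏ + x₃ᵏ and x₁ᵏ⁺¹x₂ᵏ⁺¹x₃ᵏ⁺¹ = x₁ᵏx₂ᵏx₃ᵏ. -/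
/-- The conservative scheme `F₁ᵗ` for the 3-species Lotka–Volterra system exactly
preserves `x₁ + x₂ + x₃` and `x₁ x₂ x₃`. -/
theorem lotka_volterra_three_species_scheme_one_conserves
    (τ : ℝ) (hτ : 0 < τ)
    (x₁k x₂k x₃k x₁k1 x₂k1 x₃k1 : ℝ)
    (h₁ : (x₁k1 - x₁k) / τ = x₁k1 * (x₂k1 - x₃k))
    (h₂ : (x₂k1 - x₂k) / τ = x₂k * x₃k - x₁k1 * x₂k1)
    (h₃ : (x₃k1 - x₃k) / τ = x₃k * (x₁k1 - x₂k)) :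
    x₁k1 + x₂k1 + x₃k1 = x₁k + x₂k + x₃k ∧
    x₁k1 * x₂k1 * x₃k1 = x₁k * x₂k * x₃k := by
  have hτ' : τ ≠ 0 := ne_of_gt hτ
  rw [div_eq_iff hτ'] at h₁ h₂ h₃
  constructor
  · linear_combination h₁ + h₂ + h₃
  · linear_combination x₁k1 * x₂k1 * h₃ + x₃k * x₁k1 * h₂ + x₃k * x₂k * h₁
end

section
/- Consider the discrete scheme F₂ᵗ: (x₁ᵏ⁺¹ − x₁ᵏ)/τ = x₁ᵏ⁺¹(x₂ᵏ − x₃ᵏ⁺¹), (x₂ᵏ⁺¹ − x₂ᵏ)/τ = x₂ᵏ(x₃ᵏ − x₁ᵏ⁺¹), (x₃ᵏ⁺¹ − x₃ᵏ)/τ = x₃ᵏ⁺¹x₁ᵏ⁺¹ − x₂ᵏx₃ᵏ. Then x₁ᵏ⁺¹ + x₂ᵏ⁺¹ + x₃ᵏ⁺¹ = x₁ᵏ + x₂ᵏ + x₃ᵏ and x₁ᵏ⁺¹x₂ᵏ⁺¹x₃ᵏ⁺¹ = x₁ᵏx₂ᵏx₃ᵏ. -/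
/-- The conservative scheme `F₂ᵗ` for the 3-species Lotka–Volterra system exactly
preserves `x₁ + x₂ + x₃` and `x₁ x₂ x₃`. -/
theorem lotka_volterra_three_species_scheme_two_conserves
    (τ : ℝ) (hτ : 0 < τ)
    (x₁k x₂k x₃k x₁k1 x₂k1 x₃k1 : ℝ)
    (h₁ : (x₁k1 - x₁k) / τ = x₁k1 * (x₂k - x₃k1))
    (h₂ : (x₂k1 - x₂k) / τ = x₂k * (x₃k - x₁k1))
    (h₃ : (x₃k1 - x₃k) / τ = x₃k1 * x₁k1 - x₂k * x₃k) :
    x₁k1 + x₂k1 + x₃k1 = x₁k + x₂k + x₃k ∧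
    x₁k1 * x₂k1 * x₃k1 = x₁k * x₂k * x₃k := by
  have hτ' : τ ≠ 0 := hτ.ne'
  have e1 : x₁k1 - x₁k = x₁k1 * (x₂k - x₃k1) * τ := (div_eq_iff hτ').mp h₁
  have e2 : x₂k1 - x₂k = x₂k * (x₃k - x₁k1) * τ := (div_eq_iff hτ').mp h₂
  have e3 : x₃k1 - x₃k = (x₃k1 * x₁k1 - x₂k * x₃k) * τ := (div_eq_iff hτ').mp h₃
  constructor
  · linear_combination e1 + e2 + e3
  · linear_combination (x₁k1 * x₃k1) * e2 +
      (x₂k * (x₃k1 - τ * x₁k1 * x₃k1 + τ * x₂k * x₃k)) * e1 +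
      (x₂k * x₁k1 - x₂k * ((x₁k1 - x₁k) - τ * x₁k1 * (x₂k - x₃k1))) * e3
end
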